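/- Let R be a finite ring with identity and J(R) its Jacobson radical. Then the unitary Cayley graph Γ(R) is well-covered if and only if the unitary Cayley graph Γ(R/J(R)) is well-covered. -/

import Mathlib

/-!
Units lift modulo the Jacobson radical `J`, and no element of `J` is a unit unless `R = 0`.
Hence `x ~ y` in `Γ(R)` iff `x + J ~ y + J` in `Γ(R/J)`: `Γ(R)` is `Γ(R/J)` with every vertex
blown up into an independent set of size `|J|`. Maximal independent sets of such a blow-up are
exactly the full preimages of maximal independent sets of `Γ(R/J)`, so all their sizes are
multiplied by `|J|`.
-/

open Pointwise

/-- The unitary Cayley graph of a ring `R`: vertices are elements of `R`,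
and `x`, `y` are adjacent iff `x - y` is a unit. -/
def unitaryCayley (R : Type*) [Ring R] : SimpleGraph R where
  Adj x y := x ≠ y ∧ IsUnit (x - y)
  symm := by
    constructor
    rintro x y ⟨hne, hu⟩
    exact ⟨hne.symm, by simpa [neg_sub] using hu.neg⟩
  loopless := by constructor; rintro x ⟨h, -⟩; exact h rfl

/-- A set of vertices is independent if its elements are pairwise nonadjacent. -/
def IsIndepSet {V : Type*} (G : SimpleGraph V) (A : Set V) : Prop :=
  A.Pairwise fun x y => ¬ G.Adj x y

/-- A maximal independent set. -/
def IsMaxIndepSet {V : Type*} (G : SimpleGraph V) (A : Set V) : Prop :=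
  IsIndepSet G A ∧ ∀ B : Set V, IsIndepSet G B → A ⊆ B → A = B

/-- A graph is well-covered if all its maximal independent sets have the same cardinality. -/
def WellCovered {V : Type*} (G : SimpleGraph V) : Prop :=
  ∀ A B : Set V, IsMaxIndepSet G A → IsMaxIndepSet G B → A.ncard = B.ncard

/-- The reduced `k`-diagonal matrix `D_k(a)`:  the `(i, j)` entry is `a (i - k)`
when `j = i + k` (mod `n`) and `i ≠ k`, and `0` otherwise. -/
def Dmat {n : ℕ} (F : Type*) [Field F] (k : Fin n) (a : Fin n → F) :
    Matrix (Fin n) (Fin n) F :=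
  Matrix.of fun i j => if i ≠ k ∧ j = i + k then a (i - k) else 0

/-- The family `𝒟` of all reduced diagonal matrices `D_k(a₁, …, a_{n-1})`. -/
def DSet {n : ℕ} (F : Type*) [Field F] : Set (Matrix (Fin n) (Fin n) F) :=
  {M | ∃ (k : Fin n) (a : Fin n → F), M = Dmat F k a}

/-- The Jacobson radical of a (possibly noncommutative) ring, as a two-sided ideal. -/
noncomputable def jacRad (R : Type*) [Ring R] : TwoSidedIdeal R :=
  (⊥ : TwoSidedIdeal R).jacobson

/-- The quotient of `R` by its Jacobson radical. -/
abbrev JacQuot (R : Type*) [Ring R] := (jacRad R).ringCon.Quotient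

/-- The quotient map `R → R/J(R)`. -/
noncomputable def jacMk (R : Type*) [Ring R] : R →+* JacQuot R := (jacRad R).ringCon.mk'

section Comap

variable {V W : Type*} {H : SimpleGraph W} {f : V → W}

lemma IsIndepSet.preimage {B : Set W} (hB : IsIndepSet H B) :
    IsIndepSet (H.comap f) (f ⁻¹' B) :=
  fun _ hx _ hy _ hxy => hB hx hy (H.ne_of_adj hxy) hxy

lemma IsIndepSet.image {A : Set V} (hA : IsIndepSet (H.comap f) A) : IsIndepSet H (f '' A) := by
  rintro _ ⟨a, ha, rfl⟩ _ ⟨b, hb, rfl⟩ hne hab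
  exact hA ha hb (ne_of_apply_ne f hne) hab

lemma IsMaxIndepSet.preimage_image_eq {A : Set V} (hA : IsMaxIndepSet (H.comap f) A) :
    f ⁻¹' (f '' A) = A :=
  (hA.2 _ hA.1.image.preimage (Set.subset_preimage_image f A)).symm

lemma IsMaxIndepSet.image (hf : Function.Surjective f) {A : Set V}
    (hA : IsMaxIndepSet (H.comap f) A) : IsMaxIndepSet H (f '' A) := by
  refine ⟨hA.1.image, fun B hB hAB => ?_⟩
  have hA_eq : A = f ⁻¹' B := hA.2 _ hB.preimage (Set.image_subset_iff.mp hAB)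
  rw [hA_eq, Set.image_preimage_eq B hf]

lemma IsMaxIndepSet.preimage (hf : Function.Surjective f) {B : Set W}
    (hB : IsMaxIndepSet H B) : IsMaxIndepSet (H.comap f) (f ⁻¹' B) := by
  refine ⟨hB.1.preimage, fun A hA hBA => ?_⟩
  have hB_eq : B = f '' A := hB.2 _ hA.image
    (by simpa only [Set.image_preimage_eq B hf] using Set.image_mono (f := f) hBA)
  exact hBA.antisymm (hB_eq ▸ Set.subset_preimage_image f A)

theorem wellCovered_comap_iff (hf : Function.Surjective f) {k : ℕ} (hk : 0 < k)
    (hcard : ∀ s : Set W, (f ⁻¹' s).ncard = s.ncard * k) :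
    WellCovered (H.comap f) ↔ WellCovered H := by
  constructor
  · intro hG B B' hB hB'
    have := hG _ _ (hB.preimage hf) (hB'.preimage hf)
    rwa [hcard, hcard, Nat.mul_left_inj hk.ne'] at this
  · intro hH A A' hA hA'
    rw [← hA.preimage_image_eq, ← hA'.preimage_image_eq, hcard, hcard,
      hH _ _ (hA.image hf) (hA'.image hf)]

end Comap

lemma AddMonoidHom.ncard_preimage_of_surjective {G H : Type*} [AddGroup G] [AddGroup H] [Finite G]
    {f : G →+ H} (hf : Function.Surjective f) (s : Set H) :
    (f ⁻¹' s).ncard = s.ncard * Nat.card f.ker := by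
  have : Finite H := .of_surjective f hf
  have : Fintype s := .ofFinite s
  rw [← Nat.card_coe_set_eq, ← Nat.card_coe_set_eq]
  calc Nat.card (f ⁻¹' s)
      = Nat.card (Σ y : s, {x // f x = y}) :=
        (Nat.card_congr (Equiv.sigmaSubtypeFiberEquivSubtype f fun _ => Iff.rfl)).symm
    _ = ∑ _ : s, Nat.card f.ker := by
        rw [Nat.card_sigma]
        exact Finset.sum_congr rfl fun y _ => Nat.card_congr (f.fiberEquivKerOfSurjective hf y)
    _ = Nat.card s * Nat.card f.ker := by simp

section JacobsonRadical

variable {R : Type*} [Ring R]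

lemma exists_mul_one_add_eq_one_of_mem_jacRad {j : R} (hj : j ∈ jacRad R) :
    ∃ z, z * (1 + j) = 1 := by
  obtain ⟨z, hz⟩ := TwoSidedIdeal.mem_jacobson_iff.mp hj 1
  rw [TwoSidedIdeal.mem_bot, mul_one, sub_eq_zero] at hz
  exact ⟨z, by rw [mul_add, mul_one, add_comm, hz]⟩

lemma isUnit_one_add_of_mem_jacRad {j : R} (hj : j ∈ jacRad R) : IsUnit (1 + j) := by
  obtain ⟨z, hz⟩ := exists_mul_one_add_eq_one_of_mem_jacRad hj
  -- `z = 1 - z j` also has a left inverse, so it is a unit with inverse `1 + j`.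
  obtain ⟨w, hw⟩ := exists_mul_one_add_eq_one_of_mem_jacRad
    (neg_mem ((jacRad R).mul_mem_left z j hj))
  have hwz : w * z = 1 := by
    rwa [← sub_eq_add_neg, show 1 - z * j = z by rw [← hz]; noncomm_ring] at hw
  exact isUnit_iff_exists.mpr ⟨z, by rw [← left_inv_eq_right_inv hwz hz, hwz], hz⟩

lemma jacMk_surjective : Function.Surjective (jacMk R) := RingCon.mk'_surjective _

lemma jacMk_eq_jacMk_iff {x y : R} : jacMk R x = jacMk R y ↔ x - y ∈ jacRad R :=
  (RingCon.eq _).trans (TwoSidedIdeal.rel_iff _ _ _)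

lemma isUnit_jacMk_iff {x : R} : IsUnit (jacMk R x) ↔ IsUnit x := by
  refine ⟨fun hx => ?_, fun hx => hx.map _⟩
  obtain ⟨y, hy⟩ := jacMk_surjective (↑hx.unit⁻¹ : JacQuot R)
  have hxy_mod : jacMk R (x * y) = jacMk R 1 := by simp [hy]
  have hyx_mod : jacMk R (y * x) = jacMk R 1 := by simp [hy]
  have hxy := isUnit_one_add_of_mem_jacRad (jacMk_eq_jacMk_iff.mp hxy_mod)
  have hyx := isUnit_one_add_of_mem_jacRad (jacMk_eq_jacMk_iff.mp hyx_mod)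
  rw [add_sub_cancel] at hxy hyx
  obtain ⟨⟨b, hb⟩, -⟩ := isUnit_iff_exists_and_exists.mp hxy
  obtain ⟨-, ⟨c, hc⟩⟩ := isUnit_iff_exists_and_exists.mp hyx
  exact isUnit_iff_exists_and_exists.mpr
    ⟨⟨y * b, by rwa [← mul_assoc]⟩, ⟨c * y, by rwa [mul_assoc]⟩⟩

lemma not_isUnit_of_mem_jacRad [Nontrivial R] {j : R} (hj : j ∈ jacRad R) : ¬IsUnit j := by
  rintro ⟨u, rfl⟩
  have h1 : (1 : R) ∈ jacRad R := by
    simpa using (jacRad R).mul_mem_left (↑u⁻¹) _ hj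
  simpa using isUnit_one_add_of_mem_jacRad (neg_mem h1)

lemma unitaryCayley_eq_comap_jacMk :
    unitaryCayley R = (unitaryCayley (JacQuot R)).comap (jacMk R) := by
  ext x y
  simp only [SimpleGraph.comap_adj, unitaryCayley, ← map_sub, isUnit_jacMk_iff,
    and_congr_left_iff]
  intro hu
  refine ⟨fun hne hJ => ?_, fun hJ hxy => hJ (congrArg _ hxy)⟩
  have : Nontrivial R := nontrivial_of_ne x y hne
  exact not_isUnit_of_mem_jacRad (jacMk_eq_jacMk_iff.mp hJ) hu

end JacobsonRadical

theorem stmt9 (R : Type*) [Ring R] [Finite R] :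
    WellCovered (unitaryCayley R) ↔ WellCovered (unitaryCayley (JacQuot R)) := by
  rw [unitaryCayley_eq_comap_jacMk]
  exact wellCovered_comap_iff jacMk_surjective Nat.card_pos
    ((jacMk R).toAddMonoidHom.ncard_preimage_of_surjective jacMk_surjective)
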